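/- arXiv:0908.1440 — 5 statements merged into one kernel-verified Lean document; each statement's English description precedes it below -/
import Mathlib

section
/- Let p, q : [0,∞) → ℝ be continuous, let ξ₁, ξ ∈ ℝ, and let K ≥ 1. Let u_p, y_p : [0,∞) → ℝ be twice continuously differentiable with −u_p'' + p·u_p = ξ₁·u_p, −y_p'' + p·y_p = ξ₁·y_p, u_p(0) = 1, u_p'(0) = 0, y_p(0) = 0, y_p'(0) = 1, and suppose |u_p(x)| ≤ K and |y_p(x)| ≤ K for all x ≥ 0. Let u : [0,∞) → ℝ be twice continuously differentiable with −u'' + (p+q)·u = ξ·u, u(0) = 1, u'(0) = 0. Then for every x ≥ 0, |u(x)| ≤ 2K · exp( 2K² ∫₀ˣ ( |ξ − ξ₁| + |q(t)| ) dt ). -/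
/-!
Variation of parameters. With `W(f, g) = f g' - f' g`, the Wronskians `A = W(u_p, u)` and
`B = W(y_p, u)` satisfy `u = A y_p - B u_p` because `W(u_p, y_p) ≡ 1`. Writing the equation
for `u` as `u'' = (p - ξ₁ + s) u` with `s = q - (ξ - ξ₁)`, their derivatives are `s u_p u` and
`s y_p u`. Hence `|u| ≤ K (|A| + |B|)` and the energy `A² + B²` grows at rate at most
`4K²|s|` times itself; Gronwall bounds it by `exp (4K² ∫ |s|)`, so that
`|A|, |B| ≤ exp (2K² ∫ |s|)`.
-/

open MeasureTheory intervalIntegral Set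

theorem le_mul_exp_integral_of_hasDerivAt_le {c c' g : ℝ → ℝ} {a b : ℝ} (hab : a ≤ b)
    (hg : ContinuousOn g (Icc a b)) (hc : ContinuousOn c (Icc a b))
    (hc' : ∀ y ∈ Ioo a b, HasDerivAt c (c' y) y)
    (hle : ∀ y ∈ Ioo a b, c' y ≤ g y * c y) :
    c b ≤ c a * Real.exp (∫ t in a..b, g t) := by
  set G : ℝ → ℝ := fun y => ∫ t in a..y, g t
  have hG : ContinuousOn G (Icc a b) := by
    have hint : IntegrableOn g (uIcc a b) := by rw [uIcc_of_le hab]; exact hg.integrableOn_Icc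
    simpa only [uIcc_of_le hab] using continuousOn_primitive_interval hint
  have hG' (y : ℝ) (hy : y ∈ Ioo a b) : HasDerivAt G (g y) y :=
    integral_hasDerivAt_right
      ((hg.mono (Icc_subset_Icc_right hy.2.le)).intervalIntegrable_of_Icc hy.1.le)
      ((hg.mono Ioo_subset_Icc_self).stronglyMeasurableAtFilter isOpen_Ioo y hy)
      (hg.continuousAt (Icc_mem_nhds hy.1 hy.2))
  have hanti : AntitoneOn (fun y => c y * Real.exp (-G y)) (Icc a b) := by
    refine antitoneOn_of_hasDerivWithinAt_nonpos (convex_Icc a b) (hc.mul hG.neg.rexp)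
      (f' := fun y => (c' y - g y * c y) * Real.exp (-G y)) (fun y hy => ?_) (fun y hy => ?_)
      <;> rw [interior_Icc] at hy
    · exact ((hc' y hy).mul (hG' y hy).neg.exp).hasDerivWithinAt.congr_deriv
        (by simp only [Pi.neg_apply]; ring)
    · exact mul_nonpos_of_nonpos_of_nonneg (sub_nonpos.2 (hle y hy)) (Real.exp_pos _).le
  have hba := hanti (left_mem_Icc.2 hab) (right_mem_Icc.2 hab) hab
  simp only [G, integral_same, neg_zero, Real.exp_zero, mul_one, Real.exp_neg] at hba
  rwa [← div_eq_mul_inv, div_le_iff₀ (Real.exp_pos _)] at hba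

def wronskian (f f' g g' : ℝ → ℝ) (x : ℝ) : ℝ := f x * g' x - f' x * g x

def IsSolutionOn (r : ℝ → ℝ) (S : Set ℝ) (v v' v'' : ℝ → ℝ) : Prop :=
  ∀ x ∈ S, HasDerivAt v (v' x) x ∧ HasDerivAt v' (v'' x) x ∧ v'' x = r x * v x

theorem wronskian_mul_eq (f f' g g' u u' : ℝ → ℝ) (x : ℝ) :
    wronskian f f' g g' x * u x = wronskian f f' u u' x * g x - wronskian g g' u u' x * f x := by
  unfold wronskian
  ring

theorem abs_le_of_wronskian_eq_one {f f' g g' u u' : ℝ → ℝ} {x K : ℝ}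
    (hW : wronskian f f' g g' x = 1) (hf : |f x| ≤ K) (hg : |g x| ≤ K) :
    |u x| ≤ K * (|wronskian f f' u u' x| + |wronskian g g' u u' x|) := by
  rw [← one_mul (u x), ← hW, wronskian_mul_eq]
  calc _ ≤ |wronskian f f' u u' x * g x| + |wronskian g g' u u' x * f x| := abs_sub _ _
    _ = |wronskian f f' u u' x| * |g x| + |wronskian g g' u u' x| * |f x| := by
      rw [abs_mul, abs_mul]
    _ ≤ |wronskian f f' u u' x| * K + |wronskian g g' u u' x| * K := by gcongr
    _ = _ := by ring

theorem two_mul_mul_add_two_mul_mul_le {A B s φ ψ v K : ℝ} (hφ : |φ| ≤ K) (hψ : |ψ| ≤ K)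
    (hv : |v| ≤ K * (|A| + |B|)) :
    2 * A * (s * φ * v) + 2 * B * (s * ψ * v) ≤ 4 * K ^ 2 * |s| * (A ^ 2 + B ^ 2) := by
  have hK : 0 ≤ K := (abs_nonneg φ).trans hφ
  calc _ = 2 * s * v * (A * φ + B * ψ) := by ring
    _ ≤ 2 * |s| * |v| * (|A| * |φ| + |B| * |ψ|) := by
      refine (le_abs_self _).trans ?_
      rw [abs_mul, abs_mul, abs_mul, abs_two]
      gcongr
      exact (abs_add_le _ _).trans_eq (by rw [abs_mul, abs_mul])
    _ ≤ 2 * |s| * (K * (|A| + |B|)) * (|A| * K + |B| * K) := by gcongr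
    _ = 2 * K ^ 2 * |s| * (|A| + |B|) ^ 2 := by ring
    _ ≤ 4 * K ^ 2 * |s| * (A ^ 2 + B ^ 2) := by
      have : (|A| + |B|) ^ 2 ≤ 2 * (A ^ 2 + B ^ 2) := by
        nlinarith [sq_nonneg (|A| - |B|), sq_abs A, sq_abs B]
      nlinarith [mul_nonneg (sq_nonneg K) (abs_nonneg s)]

namespace IsSolutionOn

variable {r s f f' f'' g g' g'' : ℝ → ℝ} {a : ℝ}

theorem hasDerivAt_wronskian {S : Set ℝ} {x : ℝ} (hf : IsSolutionOn r S f f' f'')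
    (hg : IsSolutionOn (r + s) S g g' g'') (hx : x ∈ S) :
    HasDerivAt (wronskian f f' g g') (s x * f x * g x) x := by
  obtain ⟨hf₁, hf₂, hf₃⟩ := hf x hx
  obtain ⟨hg₁, hg₂, hg₃⟩ := hg x hx
  refine ((hf₁.mul hg₂).sub (hf₂.mul hg₁)).congr_deriv ?_
  rw [hf₃, hg₃, Pi.add_apply]
  ring

theorem wronskian_eq (hf : IsSolutionOn r (Ici a) f f' f'') (hg : IsSolutionOn r (Ici a) g g' g'')
    {b : ℝ} (hab : a ≤ b) : wronskian f f' g g' b = wronskian f f' g g' a := by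
  have hW (y : ℝ) (hy : a ≤ y) : HasDerivAt (wronskian f f' g g') 0 y := by
    simpa using hf.hasDerivAt_wronskian (s := 0) (by rwa [add_zero]) hy
  exact constant_of_has_deriv_right_zero
    (fun y hy => (hW y hy.1).continuousAt.continuousWithinAt)
    (fun y hy => (hW y hy.1).hasDerivWithinAt) b (right_mem_Icc.2 hab)

end IsSolutionOn

section VariationOfParameters

variable {r s g φ φ' φ'' ψ ψ' ψ'' u u' u'' : ℝ → ℝ} {a b K : ℝ}

theorem sq_wronskian_add_sq_wronskian_le (hφ : IsSolutionOn r (Ici a) φ φ' φ'')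
    (hψ : IsSolutionOn r (Ici a) ψ ψ' ψ'') (hu : IsSolutionOn (r + s) (Ici a) u u' u'')
    (hW : wronskian φ φ' ψ ψ' a = 1) (hφK : ∀ x ≥ a, |φ x| ≤ K) (hψK : ∀ x ≥ a, |ψ x| ≤ K)
    (hg : ContinuousOn g (Icc a b)) (hsg : ∀ x ∈ Ioo a b, |s x| ≤ g x) (hab : a ≤ b) :
    wronskian φ φ' u u' b ^ 2 + wronskian ψ ψ' u u' b ^ 2 ≤
      (wronskian φ φ' u u' a ^ 2 + wronskian ψ ψ' u u' a ^ 2) *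
        Real.exp (4 * K ^ 2 * ∫ t in a..b, g t) := by
  set A := wronskian φ φ' u u'
  set B := wronskian ψ ψ' u u'
  have hE (x : ℝ) (hx : a ≤ x) : HasDerivAt (fun y => A y ^ 2 + B y ^ 2)
      (2 * A x * (s x * φ x * u x) + 2 * B x * (s x * ψ x * u x)) x := by
    exact (((hφ.hasDerivAt_wronskian hu hx).fun_pow 2).add
      ((hψ.hasDerivAt_wronskian hu hx).fun_pow 2)).congr_deriv (by norm_num [A, B])
  rw [← intervalIntegral.integral_const_mul]
  refine le_mul_exp_integral_of_hasDerivAt_le hab (continuousOn_const.mul hg)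
    (fun x hx => (hE x hx.1).continuousAt.continuousWithinAt) (fun x hx => hE x hx.1.le)
    (fun x hx => ?_)
  have hu_le := abs_le_of_wronskian_eq_one (u := u) (u' := u')
    ((hφ.wronskian_eq hψ hx.1.le).trans hW) (hφK x hx.1.le) (hψK x hx.1.le)
  calc _ ≤ 4 * K ^ 2 * |s x| * (A x ^ 2 + B x ^ 2) :=
        two_mul_mul_add_two_mul_mul_le (hφK x hx.1.le) (hψK x hx.1.le) hu_le
    _ ≤ 4 * K ^ 2 * g x * (A x ^ 2 + B x ^ 2) := by gcongr; exact hsg x hx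

theorem abs_le_two_mul_exp_integral (hφ : IsSolutionOn r (Ici a) φ φ' φ'')
    (hψ : IsSolutionOn r (Ici a) ψ ψ' ψ'') (hu : IsSolutionOn (r + s) (Ici a) u u' u'')
    (hW : wronskian φ φ' ψ ψ' a = 1)
    (hE : wronskian φ φ' u u' a ^ 2 + wronskian ψ ψ' u u' a ^ 2 ≤ 1)
    (hφK : ∀ x ≥ a, |φ x| ≤ K) (hψK : ∀ x ≥ a, |ψ x| ≤ K)
    (hg : ContinuousOn g (Icc a b)) (hsg : ∀ x ∈ Ioo a b, |s x| ≤ g x) (hab : a ≤ b) :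
    |u b| ≤ 2 * K * Real.exp (2 * K ^ 2 * ∫ t in a..b, g t) := by
  set R := Real.exp (2 * K ^ 2 * ∫ t in a..b, g t)
  have hK : 0 ≤ K := (abs_nonneg _).trans (hφK a le_rfl)
  have hEb : wronskian φ φ' u u' b ^ 2 + wronskian ψ ψ' u u' b ^ 2 ≤ R ^ 2 :=
    calc _ ≤ _ := sq_wronskian_add_sq_wronskian_le hφ hψ hu hW hφK hψK hg hsg hab
      _ ≤ 1 * Real.exp (4 * K ^ 2 * ∫ t in a..b, g t) := by gcongr
      _ = R ^ 2 := by simp only [R, one_mul, ← Real.exp_nat_mul]; ring_nf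
  have hA : |wronskian φ φ' u u' b| ≤ R :=
    abs_le_of_sq_le_sq (by nlinarith [sq_nonneg (wronskian ψ ψ' u u' b)]) (Real.exp_pos _).le
  have hB : |wronskian ψ ψ' u u' b| ≤ R :=
    abs_le_of_sq_le_sq (by nlinarith [sq_nonneg (wronskian φ φ' u u' b)]) (Real.exp_pos _).le
  calc |u b| ≤ K * (|wronskian φ φ' u u' b| + |wronskian ψ ψ' u u' b|) :=
        abs_le_of_wronskian_eq_one ((hφ.wronskian_eq hψ hab).trans hW) (hφK b hab) (hψK b hab)
    _ ≤ K * (R + R) := by gcongr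
    _ = 2 * K * R := by ring

end VariationOfParameters

theorem perturbed_solution_gronwall_bound_general
    (p q : ℝ → ℝ) (hq : ContinuousOn q (Ici 0))
    (ξ₁ ξ : ℝ) (K : ℝ)
    (up up' up'' yp yp' yp'' : ℝ → ℝ)
    (hup1 : ∀ x ∈ Ici (0:ℝ), HasDerivAt up (up' x) x)
    (hup2 : ∀ x ∈ Ici (0:ℝ), HasDerivAt up' (up'' x) x)
    (hyp1 : ∀ x ∈ Ici (0:ℝ), HasDerivAt yp (yp' x) x)
    (hyp2 : ∀ x ∈ Ici (0:ℝ), HasDerivAt yp' (yp'' x) x)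
    (hODEup : ∀ x ∈ Ici (0:ℝ), -up'' x + p x * up x = ξ₁ * up x)
    (hODEyp : ∀ x ∈ Ici (0:ℝ), -yp'' x + p x * yp x = ξ₁ * yp x)
    (hbcup1 : up 0 = 1) (hbcup2 : up' 0 = 0)
    (hbcyp1 : yp 0 = 0) (hbcyp2 : yp' 0 = 1)
    (hupK : ∀ x ≥ (0:ℝ), |up x| ≤ K) (hypK : ∀ x ≥ (0:ℝ), |yp x| ≤ K)
    (u u' u'' : ℝ → ℝ)
    (hu1 : ∀ x ∈ Ici (0:ℝ), HasDerivAt u (u' x) x)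
    (hu2 : ∀ x ∈ Ici (0:ℝ), HasDerivAt u' (u'' x) x)
    (hODEu : ∀ x ∈ Ici (0:ℝ), -u'' x + (p x + q x) * u x = ξ * u x)
    (hbcu1 : u 0 = 1) (hbcu2 : u' 0 = 0) :
    ∀ x ≥ (0:ℝ),
      |u x| ≤ 2 * K *
        Real.exp (2 * K ^ 2 * ∫ t in (0:ℝ)..x, (|ξ - ξ₁| + |q t|)) := by
  intro x hx
  have hφ : IsSolutionOn (fun y => p y - ξ₁) (Ici 0) up up' up'' := fun y hy =>
    ⟨hup1 y hy, hup2 y hy, by linear_combination -hODEup y hy⟩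
  have hψ : IsSolutionOn (fun y => p y - ξ₁) (Ici 0) yp yp' yp'' := fun y hy =>
    ⟨hyp1 y hy, hyp2 y hy, by linear_combination -hODEyp y hy⟩
  have hu : IsSolutionOn ((fun y => p y - ξ₁) + fun y => q y - (ξ - ξ₁)) (Ici 0) u u' u'' :=
    fun y hy => ⟨hu1 y hy, hu2 y hy, by
      simp only [Pi.add_apply]
      linear_combination -hODEu y hy⟩
  refine abs_le_two_mul_exp_integral hφ hψ hu ?_ ?_ hupK hypK
    ((continuousOn_const.add hq.abs).mono Icc_subset_Ici_self)
    (fun y _ => (abs_sub _ _).trans_eq (add_comm _ _)) hx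
  · simp [wronskian, hbcup1, hbcup2, hbcyp1, hbcyp2]
  · simp [wronskian, hbcup1, hbcup2, hbcyp1, hbcyp2, hbcu1, hbcu2]

/-- **Variation-of-parameters / Gronwall bound for perturbed periodic operators.**
If the fundamental solutions `u_p`, `y_p` of `-v'' + p v = ξ₁ v` are bounded by `K ≥ 1`
on `[0,∞)`, then the Neumann solution `u` of `-u'' + (p+q) u = ξ u` satisfies
`|u(x)| ≤ 2K·exp(2K² ∫₀ˣ (|ξ − ξ₁| + |q(t)|) dt)`. -/
theorem perturbed_solution_gronwall_bound
    (p q : ℝ → ℝ) (hp : ContinuousOn p (Ici 0)) (hq : ContinuousOn q (Ici 0))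
    (ξ₁ ξ : ℝ) (K : ℝ) (hK : 1 ≤ K)
    (up up' up'' yp yp' yp'' : ℝ → ℝ)
    (hup1 : ∀ x ∈ Ici (0:ℝ), HasDerivAt up (up' x) x)
    (hup2 : ∀ x ∈ Ici (0:ℝ), HasDerivAt up' (up'' x) x)
    (hup3 : ContinuousOn up'' (Ici 0))
    (hyp1 : ∀ x ∈ Ici (0:ℝ), HasDerivAt yp (yp' x) x)
    (hyp2 : ∀ x ∈ Ici (0:ℝ), HasDerivAt yp' (yp'' x) x)
    (hyp3 : ContinuousOn yp'' (Ici 0))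
    (hODEup : ∀ x ∈ Ici (0:ℝ), -up'' x + p x * up x = ξ₁ * up x)
    (hODEyp : ∀ x ∈ Ici (0:ℝ), -yp'' x + p x * yp x = ξ₁ * yp x)
    (hbcup1 : up 0 = 1) (hbcup2 : up' 0 = 0)
    (hbcyp1 : yp 0 = 0) (hbcyp2 : yp' 0 = 1)
    (hupK : ∀ x ≥ (0:ℝ), |up x| ≤ K) (hypK : ∀ x ≥ (0:ℝ), |yp x| ≤ K)
    (u u' u'' : ℝ → ℝ)
    (hu1 : ∀ x ∈ Ici (0:ℝ), HasDerivAt u (u' x) x)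
    (hu2 : ∀ x ∈ Ici (0:ℝ), HasDerivAt u' (u'' x) x)
    (hu3 : ContinuousOn u'' (Ici 0))
    (hODEu : ∀ x ∈ Ici (0:ℝ), -u'' x + (p x + q x) * u x = ξ * u x)
    (hbcu1 : u 0 = 1) (hbcu2 : u' 0 = 0) :
    ∀ x ≥ (0:ℝ),
      |u x| ≤ 2 * K *
        Real.exp (2 * K ^ 2 * ∫ t in (0:ℝ)..x, (|ξ - ξ₁| + |q t|)) :=
  perturbed_solution_gronwall_bound_general p q hq ξ₁ ξ K up up' up'' yp yp' yp'' hup1 hup2 hyp1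
    hyp2 hODEup hODEyp hbcup1 hbcup2 hbcyp1 hbcyp2 hupK hypK u u' u'' hu1 hu2 hODEu hbcu1 hbcu2
end

section
/- Let μ, μ* be positive Borel measures on ℝ with μ ≤ μ* (i.e., μ(E) ≤ μ*(E) for every Borel set E). Let K, K* : ℝ × ℝ → ℝ be symmetric kernels whose sections K(ξ,·), K*(ξ,·) are square-integrable with respect to both μ and μ*, satisfying for all ξ, β ∈ ℝ: (i) ∫ K(ξ,ζ)K(β,ζ) dμ(ζ) = K(ξ,β); (ii) ∫ K*(ξ,ζ)K*(β,ζ) dμ*(ζ) = K*(ξ,β); (iii) ∫ K*(ξ,ζ)K(β,ζ) dμ(ζ) = K*(ξ,β). Then for every ξ ∈ ℝ, ∫ ( K(ξ,ζ) − K*(ξ,ζ) )² dμ(ζ) ≤ K(ξ,ξ) − K*(ξ,ξ); in particular K*(ξ,ξ) ≤ K(ξ,ξ). -/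
/-!
Expand the square: `∫ (K(ξ,·) − K*(ξ,·))² dμ = K(ξ,ξ) − 2 K*(ξ,ξ) + ∫ K*(ξ,·)² dμ` by (i) and (iii),
and `∫ K*(ξ,·)² dμ ≤ ∫ K*(ξ,·)² dμ* = K*(ξ,ξ)` by `μ ≤ μ*` and (ii).
-/

open MeasureTheory

section

variable {α : Type*} [MeasurableSpace α]

lemma integral_sub_sq_eq {μ : Measure α} {f g : α → ℝ} (hf : MemLp f 2 μ) (hg : MemLp g 2 μ) :
    ∫ x, (f x - g x) ^ 2 ∂μ
      = ∫ x, f x * f x ∂μ - 2 * ∫ x, g x * f x ∂μ + ∫ x, g x * g x ∂μ := by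
  have hff : Integrable (fun x => f x * f x) μ := hf.integrable_mul hf
  have hgf : Integrable (fun x => g x * f x) μ := hg.integrable_mul hf
  have hgg : Integrable (fun x => g x * g x) μ := hg.integrable_mul hg
  have hff_sub_hgf : Integrable (fun x => f x * f x - 2 * (g x * f x)) μ :=
    hff.sub (hgf.const_mul 2)
  calc ∫ x, (f x - g x) ^ 2 ∂μ
      = ∫ x, f x * f x - 2 * (g x * f x) + g x * g x ∂μ := by congr 1; ext x; ring
    _ = ∫ x, f x * f x ∂μ - 2 * ∫ x, g x * f x ∂μ + ∫ x, g x * g x ∂μ := by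
      rw [integral_add hff_sub_hgf hgg, integral_sub hff (hgf.const_mul 2),
        integral_const_mul]

lemma integral_mul_self_mono_measure {μ ν : Measure α} (hμν : μ ≤ ν) {g : α → ℝ}
    (hg : MemLp g 2 ν) : ∫ x, g x * g x ∂μ ≤ ∫ x, g x * g x ∂ν :=
  integral_mono_measure hμν (Filter.Eventually.of_forall fun x => mul_self_nonneg (g x))
    (hg.integrable_mul hg)

lemma integral_sub_sq_le_of_inner_eq {μ ν : Measure α} (hμν : μ ≤ ν) {f g : α → ℝ}
    (hf : MemLp f 2 μ) (hg : MemLp g 2 ν) {a b : ℝ} (hff : ∫ x, f x * f x ∂μ = a)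
    (hgf : ∫ x, g x * f x ∂μ = b) (hgg : ∫ x, g x * g x ∂ν = b) :
    ∫ x, (f x - g x) ^ 2 ∂μ ≤ a - b := by
  have hmono := integral_mul_self_mono_measure hμν hg
  rw [integral_sub_sq_eq hf (hg.mono_measure hμν), hff, hgf]
  linarith

end

theorem lubinsky_first_step_general
    (μ μs : Measure ℝ) (hle : μ ≤ μs)
    (K K' : ℝ → ℝ → ℝ)
    (hKL2 : ∀ ξ : ℝ, MemLp (K ξ) 2 μ ∧ MemLp (K ξ) 2 μs)
    (hK'L2 : ∀ ξ : ℝ, MemLp (K' ξ) 2 μ ∧ MemLp (K' ξ) 2 μs)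
    (hrepK : ∀ ξ β : ℝ, ∫ ζ, K ξ ζ * K β ζ ∂μ = K ξ β)
    (hrepK' : ∀ ξ β : ℝ, ∫ ζ, K' ξ ζ * K' β ζ ∂μs = K' ξ β)
    (hmixed : ∀ ξ β : ℝ, ∫ ζ, K' ξ ζ * K β ζ ∂μ = K' ξ β) :
    ∀ ξ : ℝ,
      (∫ ζ, (K ξ ζ - K' ξ ζ) ^ 2 ∂μ ≤ K ξ ξ - K' ξ ξ) ∧ K' ξ ξ ≤ K ξ ξ := by
  intro ξ
  have hsq := integral_sub_sq_le_of_inner_eq hle (hKL2 ξ).1 (hK'L2 ξ).2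
    (hrepK ξ ξ) (hmixed ξ ξ) (hrepK' ξ ξ)
  exact ⟨hsq, sub_nonneg.1 ((integral_nonneg fun ζ => sq_nonneg _).trans hsq)⟩

/-- **First step of Lubinsky's inequality.** For reproducing kernels `K`, `K'` of
measures `μ ≤ μ*`, one has `∫ (K(ξ,·) − K'(ξ,·))² dμ ≤ K(ξ,ξ) − K'(ξ,ξ)`; in
particular `K'(ξ,ξ) ≤ K(ξ,ξ)`. -/
theorem lubinsky_first_step
    (μ μs : Measure ℝ) (hle : μ ≤ μs)
    (K K' : ℝ → ℝ → ℝ)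
    (hKsymm : ∀ ξ β : ℝ, K ξ β = K β ξ)
    (hK'symm : ∀ ξ β : ℝ, K' ξ β = K' β ξ)
    (hKL2 : ∀ ξ : ℝ, MemLp (K ξ) 2 μ ∧ MemLp (K ξ) 2 μs)
    (hK'L2 : ∀ ξ : ℝ, MemLp (K' ξ) 2 μ ∧ MemLp (K' ξ) 2 μs)
    (hrepK : ∀ ξ β : ℝ, ∫ ζ, K ξ ζ * K β ζ ∂μ = K ξ β)
    (hrepK' : ∀ ξ β : ℝ, ∫ ζ, K' ξ ζ * K' β ζ ∂μs = K' ξ β)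
    (hmixed : ∀ ξ β : ℝ, ∫ ζ, K' ξ ζ * K β ζ ∂μ = K' ξ β) :
    ∀ ξ : ℝ,
      (∫ ζ, (K ξ ζ - K' ξ ζ) ^ 2 ∂μ ≤ K ξ ξ - K' ξ ξ) ∧ K' ξ ξ ≤ K ξ ξ :=
  lubinsky_first_step_general μ μs hle K K' hKL2 hK'L2 hrepK hrepK' hmixed
end

section
/- For each n ∈ ℕ, let μₙ, μₙ* be positive Borel measures on ℝ with μₙ ≤ μₙ*, and let Kₙ, Kₙ* : ℝ × ℝ → ℝ be symmetric kernels whose sections are square-integrable with respect to both measures and which satisfy, for all ξ, β ∈ ℝ: ∫ Kₙ(ξ,ζ)Kₙ(β,ζ) dμₙ(ζ) = Kₙ(ξ,β); ∫ Kₙ*(ξ,ζ)Kₙ*(β,ζ) dμₙ*(ζ) = Kₙ*(ξ,β); and ∫ Kₙ*(ξ,ζ)Kₙ(β,ζ) dμₙ(ζ) = Kₙ*(ξ,β). Let ξₙ, βₙ ∈ ℝ be such that Kₙ(ξₙ,ξₙ) > 0 for all n, Kₙ*(ξₙ,ξₙ)/Kₙ(ξₙ,ξₙ) → 1 as n → ∞,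 and the sequence Kₙ(βₙ,βₙ)/Kₙ(ξₙ,ξₙ) is bounded. Then ( Kₙ(ξₙ,βₙ) − Kₙ*(ξₙ,βₙ) ) / Kₙ(ξₙ,ξₙ) → 0 as n → ∞. -/
open MeasureTheory Filter Topology

/-! In `L²(μ)` put `f = K(ξ,·)`, `g = K*(ξ,·)`, `h = K(β,·)`. The reproducing identities give
`⟪f, h⟫ = K(ξ,β)`, `⟪g, h⟫ = K*(ξ,β)`, `⟪f, f⟫ = K(ξ,ξ)` and `⟪f, g⟫ = K*(ξ,ξ)`, while `μ ≤ μ*`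
gives `‖g‖² ≤ ‖g‖²_{L²(μ*)} = K*(ξ,ξ)`. Hence `‖f - g‖² ≤ K(ξ,ξ) - K*(ξ,ξ)`, and Cauchy–Schwarz
applied to `⟪f - g, h⟫` is Lubinsky's inequality
`(K(ξ,β) - K*(ξ,β))² ≤ (K(ξ,ξ) - K*(ξ,ξ)) K(β,β)`.
Dividing by `K(ξ,ξ)²`, the squared normalized difference is at most
`(1 - K*(ξ,ξ)/K(ξ,ξ)) · K(β,β)/K(ξ,ξ)`, which tends to `0`. -/

section InnerProduct

variable {E : Type*} [NormedAddCommGroup E] [InnerProductSpace ℝ E]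

local notation "⟪" x ", " y "⟫" => inner ℝ x y

theorem inner_sub_sq_le_of_inner_self_le {f g : E} (hg : ⟪g, g⟫ ≤ ⟪f, g⟫) (h : E) :
    ⟪f - g, h⟫ ^ 2 ≤ (⟪f, f⟫ - ⟪f, g⟫) * ⟪h, h⟫ :=
  calc ⟪f - g, h⟫ ^ 2 ≤ ⟪f - g, f - g⟫ * ⟪h, h⟫ := by
        rw [sq]; exact real_inner_mul_inner_self_le _ _
    _ ≤ (⟪f, f⟫ - ⟪f, g⟫) * ⟪h, h⟫ := by
        gcongr
        · exact real_inner_self_nonneg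
        · rw [real_inner_sub_sub_self]; linarith

end InnerProduct

namespace MeasureTheory

variable {α : Type*} [MeasurableSpace α] {μ ν : Measure α}

theorem L2.real_inner_toLp_toLp {f g : α → ℝ} (hf : MemLp f 2 μ) (hg : MemLp g 2 μ) :
    inner ℝ (hf.toLp f) (hg.toLp g) = ∫ x, f x * g x ∂μ := by
  rw [L2.inner_def]
  refine integral_congr_ae ?_
  filter_upwards [hf.coeFn_toLp, hg.coeFn_toLp] with x hfx hgx
  rw [Real.inner_apply, hfx, hgx]

structure IsReproducingKernel (K : α → α → ℝ) (μ : Measure α) : Prop where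
  memLp : ∀ x, MemLp (K x) 2 μ
  integral_mul : ∀ x y, ∫ z, K x z * K y z ∂μ = K x y

namespace IsReproducingKernel

variable {K K' : α → α → ℝ}

theorem diag_nonneg (hK : IsReproducingKernel K μ) (x : α) : 0 ≤ K x x := by
  rw [← hK.integral_mul]
  exact integral_nonneg fun z => mul_self_nonneg _

theorem integral_mul_self_le_of_measure_le (hK : IsReproducingKernel K ν) (hle : μ ≤ ν) (x : α) :
    ∫ z, K x z * K x z ∂μ ≤ K x x := by
  have hint : Integrable (fun z => K x z * K x z) ν := by
    simpa only [sq] using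
      (memLp_two_iff_integrable_sq (hK.memLp x).aestronglyMeasurable).1 (hK.memLp x)
  rw [← hK.integral_mul x x]
  exact integral_mono_measure hle (Eventually.of_forall fun z => mul_self_nonneg _) hint

theorem sq_sub_le (hK : IsReproducingKernel K μ) (hK' : IsReproducingKernel K' ν) (hle : μ ≤ ν)
    (hmixed : ∀ x y, ∫ z, K' x z * K y z ∂μ = K' x y) (x y : α) :
    (K x y - K' x y) ^ 2 ≤ (K x x - K' x x) * K y y := by
  have hK'x : MemLp (K' x) 2 μ := (hK'.memLp x).mono_measure hle
  set f := (hK.memLp x).toLp (K x)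
  set g := hK'x.toLp (K' x)
  set h := (hK.memLp y).toLp (K y)
  have hfg : inner ℝ f g = K' x x := by
    rw [L2.real_inner_toLp_toLp, ← hmixed x x]
    simp only [mul_comm]
  have hgg : inner ℝ g g ≤ inner ℝ f g := by
    rw [hfg, L2.real_inner_toLp_toLp]
    exact hK'.integral_mul_self_le_of_measure_le hle x
  have key := inner_sub_sq_le_of_inner_self_le hgg h
  rwa [inner_sub_left, hfg, L2.real_inner_toLp_toLp, L2.real_inner_toLp_toLp, L2.real_inner_toLp_toLp,
    L2.real_inner_toLp_toLp, hK.integral_mul, hK.integral_mul, hK.integral_mul, hmixed] at key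

end IsReproducingKernel

end MeasureTheory

theorem tendsto_div_zero_of_sq_le_sub_mul {ι : Type*} {l : Filter ι} {u c d e : ι → ℝ}
    (hc : ∀ i, c i ≠ 0) (hsq : ∀ i, u i ^ 2 ≤ (c i - d i) * e i)
    (hd : Tendsto (fun i => d i / c i) l (𝓝 1)) (he : ∃ B, ∀ i, |e i / c i| ≤ B) :
    Tendsto (fun i => u i / c i) l (𝓝 0) := by
  obtain ⟨B, hB⟩ := he
  have hbound : ∀ i, (u i / c i) ^ 2 ≤ B * |1 - d i / c i| := fun i =>
    calc (u i / c i) ^ 2 ≤ (c i - d i) * e i / c i ^ 2 := by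
          rw [div_pow]; gcongr; exact hsq i
      _ = (1 - d i / c i) * (e i / c i) := by field_simp [hc i]
      _ ≤ |1 - d i / c i| * |e i / c i| := by rw [← abs_mul]; exact le_abs_self _
      _ ≤ B * |1 - d i / c i| := by rw [mul_comm]; gcongr; exact hB i
  have hsq_lim : Tendsto (fun i => (u i / c i) ^ 2) l (𝓝 0) := by
    refine squeeze_zero (fun i => sq_nonneg _) hbound ?_
    simpa using ((tendsto_const_nhds (x := (1 : ℝ)).sub hd).abs).const_mul B
  rw [tendsto_zero_iff_abs_tendsto_zero]
  simpa [Function.comp_def, Real.sqrt_sq_eq_abs] using hsq_lim.sqrt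

theorem comparison_step_universality_general
    (μ μs : ℕ → Measure ℝ) (hle : ∀ n, μ n ≤ μs n)
    (K K' : ℕ → ℝ → ℝ → ℝ)
    (hKL2 : ∀ n, ∀ ξ : ℝ, MemLp (K n ξ) 2 (μ n) ∧ MemLp (K n ξ) 2 (μs n))
    (hK'L2 : ∀ n, ∀ ξ : ℝ, MemLp (K' n ξ) 2 (μ n) ∧ MemLp (K' n ξ) 2 (μs n))
    (hrepK : ∀ n, ∀ ξ β : ℝ, ∫ ζ, K n ξ ζ * K n β ζ ∂(μ n) = K n ξ β)
    (hrepK' : ∀ n, ∀ ξ β : ℝ, ∫ ζ, K' n ξ ζ * K' n β ζ ∂(μs n) = K' n ξ β)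
    (hmixed : ∀ n, ∀ ξ β : ℝ, ∫ ζ, K' n ξ ζ * K n β ζ ∂(μ n) = K' n ξ β)
    (ξ β : ℕ → ℝ)
    (hpos : ∀ n, 0 < K n (ξ n) (ξ n))
    (hdiag : Tendsto (fun n => K' n (ξ n) (ξ n) / K n (ξ n) (ξ n)) atTop (nhds 1))
    (hbdd : ∃ B : ℝ, ∀ n, |K n (β n) (β n) / K n (ξ n) (ξ n)| ≤ B) :
    Tendsto (fun n => (K n (ξ n) (β n) - K' n (ξ n) (β n)) / K n (ξ n) (ξ n))
      atTop (nhds 0) := by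
  have hK : ∀ n, IsReproducingKernel (K n) (μ n) := fun n => ⟨fun x => (hKL2 n x).1, hrepK n⟩
  have hK' : ∀ n, IsReproducingKernel (K' n) (μs n) :=
    fun n => ⟨fun x => (hK'L2 n x).2, hrepK' n⟩
  exact tendsto_div_zero_of_sq_le_sub_mul (fun n => (hpos n).ne')
    (fun n => (hK n).sq_sub_le (hK' n) (hle n) (hmixed n) (ξ n) (β n)) hdiag hbdd

/-- **Comparison step for universality limits.** If for each `n` the kernels `Kₙ ≤`-wise
reproduce measures `μₙ ≤ μₙ*`, the diagonal ratios `Kₙ*(ξₙ,ξₙ)/Kₙ(ξₙ,ξₙ)` tend to `1`,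
and `Kₙ(βₙ,βₙ)/Kₙ(ξₙ,ξₙ)` is bounded, then the normalized off-diagonal difference
`(Kₙ(ξₙ,βₙ) − Kₙ*(ξₙ,βₙ))/Kₙ(ξₙ,ξₙ)` tends to `0`. -/
theorem comparison_step_universality
    (μ μs : ℕ → Measure ℝ) (hle : ∀ n, μ n ≤ μs n)
    (K K' : ℕ → ℝ → ℝ → ℝ)
    (hKsymm : ∀ n, ∀ ξ β : ℝ, K n ξ β = K n β ξ)
    (hK'symm : ∀ n, ∀ ξ β : ℝ, K' n ξ β = K' n β ξ)
    (hKL2 : ∀ n, ∀ ξ : ℝ, MemLp (K n ξ) 2 (μ n) ∧ MemLp (K n ξ) 2 (μs n))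
    (hK'L2 : ∀ n, ∀ ξ : ℝ, MemLp (K' n ξ) 2 (μ n) ∧ MemLp (K' n ξ) 2 (μs n))
    (hrepK : ∀ n, ∀ ξ β : ℝ, ∫ ζ, K n ξ ζ * K n β ζ ∂(μ n) = K n ξ β)
    (hrepK' : ∀ n, ∀ ξ β : ℝ, ∫ ζ, K' n ξ ζ * K' n β ζ ∂(μs n) = K' n ξ β)
    (hmixed : ∀ n, ∀ ξ β : ℝ, ∫ ζ, K' n ξ ζ * K n β ζ ∂(μ n) = K' n ξ β)
    (ξ β : ℕ → ℝ)
    (hpos : ∀ n, 0 < K n (ξ n) (ξ n))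
    (hdiag : Tendsto (fun n => K' n (ξ n) (ξ n) / K n (ξ n) (ξ n)) atTop (nhds 1))
    (hbdd : ∃ B : ℝ, ∀ n, |K n (β n) (β n) / K n (ξ n) (ξ n)| ≤ B) :
    Tendsto (fun n => (K n (ξ n) (β n) - K' n (ξ n) (β n)) / K n (ξ n) (ξ n))
      atTop (nhds 0) :=
  comparison_step_universality_general μ μs hle K K' hKL2 hK'L2 hrepK hrepK' hmixed ξ β hpos hdiag
    hbdd
end

section
/- Fix ξ > 0 and a, b ∈ ℝ with a ≠ b, and define S_L(α,β) = ∫₀ᴸ cos(√α·x)·cos(√β·x) dx for α, β ≥ 0. Then lim_{L→∞} S_L(ξ + a/L, ξ + b/L) / S_L(ξ, ξ) = 2√ξ · sin( (a − b)/(2√ξ) ) / (a − b), where for each L the arguments ξ + a/L and ξ + b/L are eventually positive. -/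
open intervalIntegral Filter

/-!
Both kernels are computed in closed form with the product-to-sum formula:
`S_L(α, β) = L · (sinc((√α − √β)L) + sinc((√α + √β)L)) / 2`. Along `α = ξ + a/L`, `β = ξ + b/L`,
the difference `(√α − √β)L` tends to `(a − b)/(2√ξ)` (a difference quotient of `√` at `ξ`), while
the sum `(√α + √β)L` tends to `∞`, where `sinc` vanishes. Hence numerator and denominator,
divided by `L`, tend to `sinc((a − b)/(2√ξ))/2` and `sinc 0/2 = 1/2`.
-/

open Real Topology

lemma Real.tendsto_sinc_atTop : Tendsto sinc atTop (𝓝 0) := by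
  have hbound : ∀ᶠ x in atTop, ‖sinc x‖ ≤ x⁻¹ := by
    filter_upwards [eventually_gt_atTop 0] with x hx
    rw [sinc_of_ne_zero hx.ne', norm_div, Real.norm_of_nonneg hx.le, div_eq_mul_inv]
    exact mul_le_of_le_one_left (inv_nonneg.2 hx.le) (abs_sin_le_one x)
  exact squeeze_zero_norm' hbound tendsto_inv_atTop_zero

lemma integral_cos_mul (c L : ℝ) : ∫ x in (0 : ℝ)..L, cos (c * x) = L * sinc (c * L) := by
  rcases eq_or_ne c 0 with rfl | hc
  · simp
  rcases eq_or_ne L 0 with rfl | hL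
  · simp
  rw [integral_comp_mul_left (fun x => cos x) hc, integral_cos,
    sinc_of_ne_zero (mul_ne_zero hc hL)]
  simp only [mul_zero, sin_zero, sub_zero, smul_eq_mul]
  field_simp

lemma integral_cos_mul_mul_cos_mul (p q L : ℝ) :
    ∫ x in (0 : ℝ)..L, cos (p * x) * cos (q * x) =
      L * ((sinc ((p - q) * L) + sinc ((p + q) * L)) / 2) := by
  have hprod : ∀ x, cos (p * x) * cos (q * x) = (cos ((p - q) * x) + cos ((p + q) * x)) / 2 := by
    intro x
    rw [sub_mul, add_mul, ← two_mul_cos_mul_cos]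
    ring
  simp_rw [hprod]
  rw [integral_div, integral_add ((by fun_prop : Continuous _).intervalIntegrable _ _)
    ((by fun_prop : Continuous _).intervalIntegrable _ _), integral_cos_mul, integral_cos_mul]
  ring

lemma HasDerivAt.tendsto_sub_mul_atTop {f : ℝ → ℝ} {f' x : ℝ} (hf : HasDerivAt f f' x) (a b : ℝ) :
    Tendsto (fun L => (f (x + a / L) - f (x + b / L)) * L) atTop (𝓝 ((a - b) * f')) := by
  have hline : ∀ c : ℝ, HasDerivAt (fun t => f (x + c * t)) (f' * c) 0 := fun c => by
    have hinner : HasDerivAt (fun t : ℝ => x + c * t) c 0 := by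
      simpa using ((hasDerivAt_id 0).const_mul c).const_add x
    exact hf.comp_of_eq 0 hinner (by simp)
  have hslope := hasDerivAt_iff_tendsto_slope_zero.1 ((hline a).sub (hline b))
  have hinv := tendsto_inv_atTop_nhdsGT_zero.mono_right (nhdsGT_le_nhdsNE (0 : ℝ))
  refine ((hslope.comp hinv).congr' ?_).trans ?_
  · filter_upwards [eventually_ne_atTop 0] with L hL
    simp [div_eq_mul_inv, mul_comm]
  · rw [sub_mul, mul_comm a, mul_comm b]

lemma tendsto_integral_cos_mul_mul_cos_mul_div {p q : ℝ → ℝ} {c : ℝ}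
    (hsub : Tendsto (fun L => (p L - q L) * L) atTop (𝓝 c))
    (hadd : Tendsto (fun L => (p L + q L) * L) atTop atTop) :
    Tendsto (fun L => (∫ x in (0 : ℝ)..L, cos (p L * x) * cos (q L * x)) / L) atTop
      (𝓝 (sinc c / 2)) := by
  have hlim : Tendsto (fun L => (sinc ((p L - q L) * L) + sinc ((p L + q L) * L)) / 2) atTop
      (𝓝 ((sinc c + 0) / 2)) :=
    (((continuous_sinc.tendsto c).comp hsub).add (tendsto_sinc_atTop.comp hadd)).div_const 2
  rw [add_zero] at hlim
  refine hlim.congr' ?_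
  filter_upwards [eventually_ne_atTop 0] with L hL
  rw [integral_cos_mul_mul_cos_mul, mul_div_cancel_left₀ _ hL]

lemma tendsto_add_div_atTop (ξ a : ℝ) : Tendsto (fun L => ξ + a / L) atTop (𝓝 ξ) := by
  simpa using tendsto_const_nhds.add (tendsto_const_nhds.div_atTop (tendsto_id (α := ℝ)))

/-- **Universality (sine-kernel) limit for the free Schrödinger operator.** With
`S_L(α,β) = ∫₀ᴸ cos(√α x)cos(√β x) dx`, for `ξ > 0` and `a ≠ b`,
`S_L(ξ + a/L, ξ + b/L)/S_L(ξ,ξ) → 2√ξ sin((a−b)/(2√ξ))/(a−b)` as `L → ∞`;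
moreover the arguments `ξ + a/L`, `ξ + b/L` are eventually positive. -/
theorem free_universality_limit
    (ξ a b : ℝ) (hξ : 0 < ξ) (hab : a ≠ b)
    (S : ℝ → ℝ → ℝ → ℝ)
    (hS : ∀ L α β : ℝ, S L α β =
      ∫ x in (0:ℝ)..L, Real.cos (Real.sqrt α * x) * Real.cos (Real.sqrt β * x)) :
    (∀ᶠ L in atTop, 0 < ξ + a / L ∧ 0 < ξ + b / L) ∧
    Tendsto (fun L : ℝ => S L (ξ + a / L) (ξ + b / L) / S L ξ ξ) atTop
      (nhds (2 * Real.sqrt ξ * Real.sin ((a - b) / (2 * Real.sqrt ξ)) / (a - b))) := by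
  refine ⟨((tendsto_add_div_atTop ξ a).eventually (lt_mem_nhds hξ)).and
    ((tendsto_add_div_atTop ξ b).eventually (lt_mem_nhds hξ)), ?_⟩
  have hsqrt : ∀ c, Tendsto (fun L => √(ξ + c / L)) atTop (𝓝 √ξ) := fun c =>
    (continuous_sqrt.tendsto ξ).comp (tendsto_add_div_atTop ξ c)
  have hsum_pos : 0 < √ξ + √ξ := by positivity
  have hnum := tendsto_integral_cos_mul_mul_cos_mul_div
    ((hasDerivAt_sqrt hξ.ne').tendsto_sub_mul_atTop a b)
    (((hsqrt a).add (hsqrt b)).pos_mul_atTop hsum_pos tendsto_id)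
  have hden := tendsto_integral_cos_mul_mul_cos_mul_div (p := fun _ => √ξ) (q := fun _ => √ξ)
    (c := 0) (by simp) (tendsto_id.const_mul_atTop hsum_pos)
  have hlimit : sinc ((a - b) * (1 / (2 * √ξ))) / 2 / (sinc 0 / 2) =
      2 * √ξ * sin ((a - b) / (2 * √ξ)) / (a - b) := by
    have hc : (a - b) * (1 / (2 * √ξ)) ≠ 0 := by
      have := sub_ne_zero.2 hab
      positivity
    rw [sinc_zero, sinc_of_ne_zero hc]
    field_simp
  refine hlimit ▸ (hnum.div hden (by simp)).congr' ?_
  filter_upwards [eventually_ne_atTop 0] with L hL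
  rw [hS, hS, Pi.div_apply, div_div_div_cancel_right₀ hL]
end

section
/- Let V : [0,∞) → ℝ be continuous with ∫₀ˣ |V(t)| dt ≤ M·x for all x ≥ 0, where M ≥ 0. Let ε > 0 and let ξ > 0 satisfy ξ ≥ 4M²/ε². Let u : [0,∞) → ℝ be twice continuously differentiable with −u'' + V·u = ξ·u, u(0) = 1, u'(0) = 0. Then for every L > 0, ∫₀ᴸ u(x)² dx ≤ e^{εL}/ε. -/
/-!
Put `s = √ξ`. Along a solution of `-u'' + V u = ξ u` the energy `E = u² + u'² / ξ` satisfies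
`E' = 2 V u u' / ξ ≤ (|V| / s) E`, since `2 |u| |u' / s| ≤ u² + u'² / ξ`. Grönwall's inequality with
the integrating factor `exp (-(∫₀ˣ |V|) / s)` gives `u(x)² ≤ E(x) ≤ exp ((∫₀ˣ |V|) / s)`, and
`ξ ≥ 4M²/ε²` makes the exponent at most `M x / s ≤ ε x`; integrating `exp (ε x)` over `[0, L]`
yields the bound.
-/

open MeasureTheory intervalIntegral Set Real

theorem hasDerivWithinAt_integral_Ici {E : Type*} [NormedAddCommGroup E] [NormedSpace ℝ E]
    [CompleteSpace E] {f : ℝ → E} {a x : ℝ} (hf : ContinuousOn f (Ici a)) (hx : x ∈ Ici a) :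
    HasDerivWithinAt (fun y => ∫ t in a..y, f t) (f x) (Ici a) x := by
  have hint : IntervalIntegrable f volume a x :=
    (hf.mono (uIcc_of_le (mem_Ici.1 hx) ▸ Icc_subset_Ici_self)).intervalIntegrable
  have hmeas := hf.aestronglyMeasurable (μ := volume) measurableSet_Ici
  rcases (mem_Ici.1 hx).eq_or_lt with rfl | hax
  · exact integral_hasDerivWithinAt_right hint
      ⟨Ici a, Filter.mem_of_superset self_mem_nhdsWithin Ioi_subset_Ici_self, hmeas⟩
      ((hf.continuousWithinAt self_mem_Ici).mono Ioi_subset_Ici_self)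
  · have hnhds : Ici a ∈ nhds x := Ici_mem_nhds hax
    exact (integral_hasDerivAt_right hint ⟨Ici a, hnhds, hmeas⟩
      (hf.continuousAt hnhds)).hasDerivWithinAt

theorem le_mul_exp_sub_of_hasDerivWithinAt_le_mul {E E' W w : ℝ → ℝ} {a x : ℝ}
    (hE : ∀ y ∈ Ici a, HasDerivWithinAt E (E' y) (Ici a) y)
    (hW : ∀ y ∈ Ici a, HasDerivWithinAt W (w y) (Ici a) y)
    (hle : ∀ y ∈ Ioi a, E' y ≤ w y * E y) (hx : x ∈ Ici a) :
    E x ≤ E a * exp (W x - W a) := by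
  have hG : ∀ y ∈ Ici a, HasDerivWithinAt (fun y => E y * exp (-W y))
      ((E' y - w y * E y) * exp (-W y)) (Ici a) y := fun y hy =>
    ((hE y hy).mul (hW y hy).neg.exp).congr_deriv (by simp only [Pi.neg_apply]; ring)
  have hanti : AntitoneOn (fun y => E y * exp (-W y)) (Ici a) := by
    refine antitoneOn_of_hasDerivWithinAt_nonpos (convex_Ici a)
      (f' := fun y => (E' y - w y * E y) * exp (-W y))
      (fun y hy => (hG y hy).continuousWithinAt) (fun y hy => ?_) (fun y hy => ?_)
    · rw [interior_Ici] at hy ⊢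
      exact (hG y (mem_Ici.2 hy.le)).mono Ioi_subset_Ici_self
    · rw [interior_Ici] at hy
      exact mul_nonpos_of_nonpos_of_nonneg (sub_nonpos.2 (hle y hy)) (exp_pos _).le
  calc E x = E x * exp (-W x) * exp (W x) := by
        rw [mul_assoc, ← exp_add, neg_add_cancel, exp_zero, mul_one]
    _ ≤ E a * exp (-W a) * exp (W x) :=
        mul_le_mul_of_nonneg_right (hanti self_mem_Ici hx hx) (exp_pos _).le
    _ = E a * exp (W x - W a) := by rw [mul_assoc, ← exp_add, neg_add_eq_sub]

theorem mul_two_mul_div_le_abs_div_sqrt_mul {ξ : ℝ} (hξ : 0 < ξ) (v a b : ℝ) :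
    v * (2 * a * b) / ξ ≤ |v| / √ξ * (a ^ 2 + b ^ 2 / ξ) := by
  have hξs : ξ = √ξ ^ 2 := (sq_sqrt hξ.le).symm
  have hs : 0 < √ξ := sqrt_pos.2 hξ
  set s := √ξ
  have hamgm : |2 * a * (b / s)| ≤ a ^ 2 + (b / s) ^ 2 := by
    rw [abs_le]
    constructor <;> nlinarith [sq_nonneg (a + b / s), sq_nonneg (a - b / s)]
  rw [hξs]
  calc v * (2 * a * b) / s ^ 2 = v / s * (2 * a * (b / s)) := by field_simp
    _ ≤ |v / s| * |2 * a * (b / s)| := (le_abs_self _).trans (abs_mul _ _).le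
    _ ≤ |v| / s * (a ^ 2 + b ^ 2 / s ^ 2) := by
        rw [abs_div, abs_of_pos hs, ← div_pow]
        gcongr

theorem integral_exp_mul {c : ℝ} (hc : c ≠ 0) (a b : ℝ) :
    ∫ x in a..b, exp (c * x) = (exp (c * b) - exp (c * a)) / c := by
  rw [integral_comp_mul_left (fun x => exp x) hc, integral_exp, smul_eq_mul, inv_mul_eq_div]

theorem sq_le_exp_integral_abs_div_sqrt_of_neumann {V u u' u'' : ℝ → ℝ} {ξ : ℝ} (hξ : 0 < ξ)
    (hV : ContinuousOn V (Ici 0))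
    (hu1 : ∀ x ∈ Ici (0:ℝ), HasDerivAt u (u' x) x)
    (hu2 : ∀ x ∈ Ici (0:ℝ), HasDerivAt u' (u'' x) x)
    (hODE : ∀ x ∈ Ici (0:ℝ), -u'' x + V x * u x = ξ * u x)
    (hbc1 : u 0 = 1) (hbc2 : u' 0 = 0) {x : ℝ} (hx : x ∈ Ici 0) :
    u x ^ 2 ≤ exp ((∫ t in (0:ℝ)..x, |V t|) / √ξ) := by
  have hE : ∀ y ∈ Ici (0:ℝ), HasDerivWithinAt (fun y => u y ^ 2 + u' y ^ 2 / ξ)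
      (V y * (2 * u y * u' y) / ξ) (Ici 0) y := fun y hy =>
    (((hu1 y hy).pow 2).add (((hu2 y hy).pow 2).div_const ξ)).hasDerivWithinAt.congr_deriv (by
      rw [show u'' y = (V y - ξ) * u y by linarith [hODE y hy]]
      field_simp
      ring)
  have hW : ∀ y ∈ Ici (0:ℝ), HasDerivWithinAt (fun y => (∫ t in (0:ℝ)..y, |V t|) / √ξ)
      (|V y| / √ξ) (Ici 0) y := fun y hy =>
    (hasDerivWithinAt_integral_Ici hV.abs hy).div_const _
  have hgronwall := le_mul_exp_sub_of_hasDerivWithinAt_le_mul hE hW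
    (fun y _ => mul_two_mul_div_le_abs_div_sqrt_mul hξ _ _ _) hx
  calc u x ^ 2 ≤ u x ^ 2 + u' x ^ 2 / ξ := le_add_of_nonneg_right (by positivity)
    _ ≤ exp ((∫ t in (0:ℝ)..x, |V t|) / √ξ) := by simpa [hbc1, hbc2] using hgronwall

theorem regularity_bound_large_energy_general
    (V : ℝ → ℝ) (hV : ContinuousOn V (Ici 0))
    (M : ℝ)
    (hVM : ∀ x ≥ (0:ℝ), (∫ t in (0:ℝ)..x, |V t|) ≤ M * x)
    (ε : ℝ) (hε : 0 < ε)
    (ξ : ℝ) (hξ : 0 < ξ) (hξM : 4 * M ^ 2 / ε ^ 2 ≤ ξ)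
    (u u' u'' : ℝ → ℝ)
    (hu1 : ∀ x ∈ Ici (0:ℝ), HasDerivAt u (u' x) x)
    (hu2 : ∀ x ∈ Ici (0:ℝ), HasDerivAt u' (u'' x) x)
    (hODE : ∀ x ∈ Ici (0:ℝ), -u'' x + V x * u x = ξ * u x)
    (hbc1 : u 0 = 1) (hbc2 : u' 0 = 0) :
    ∀ L > (0:ℝ), ∫ x in (0:ℝ)..L, (u x) ^ 2 ≤ Real.exp (ε * L) / ε := by
  intro L hL
  have hs : 0 < √ξ := sqrt_pos.2 hξ
  have hMs : M ≤ ε * √ξ := by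
    have : 4 * M ^ 2 ≤ ε ^ 2 * √ξ ^ 2 := by
      rwa [sq_sqrt hξ.le, ← div_le_iff₀' (by positivity)]
    nlinarith [mul_pos hε hs]
  have hpt : ∀ x ∈ Icc 0 L, u x ^ 2 ≤ exp (ε * x) := fun x hx =>
    (sq_le_exp_integral_abs_div_sqrt_of_neumann hξ hV hu1 hu2 hODE hbc1 hbc2 hx.1).trans <|
      exp_le_exp.2 <| (div_le_iff₀ hs).2 <| (hVM x hx.1).trans (by linarith [mul_le_mul_of_nonneg_right hMs hx.1])
  have hu : ContinuousOn u (Icc 0 L) := fun x hx =>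
    (hu1 x hx.1).continuousAt.continuousWithinAt
  calc ∫ x in (0:ℝ)..L, u x ^ 2
      ≤ ∫ x in (0:ℝ)..L, exp (ε * x) :=
        integral_mono_on hL.le ((hu.pow 2).intervalIntegrable_of_Icc hL.le)
          (by apply Continuous.intervalIntegrable; fun_prop) hpt
    _ ≤ exp (ε * L) / ε := by
        rw [integral_exp_mul hε.ne', mul_zero, exp_zero]
        gcongr
        linarith

/-- **Regularity bound at large energy.** If `∫₀ˣ |V| ≤ M x` and `ξ ≥ 4M²/ε²`,
`ξ > 0`, then the Neumann solution `u` of `-u'' + V u = ξ u`, `u(0) = 1`, `u'(0) = 0`,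
satisfies `∫₀ᴸ u² ≤ e^{εL}/ε` for every `L > 0`. -/
theorem regularity_bound_large_energy
    (V : ℝ → ℝ) (hV : ContinuousOn V (Ici 0))
    (M : ℝ) (hM : 0 ≤ M)
    (hVM : ∀ x ≥ (0:ℝ), (∫ t in (0:ℝ)..x, |V t|) ≤ M * x)
    (ε : ℝ) (hε : 0 < ε)
    (ξ : ℝ) (hξ : 0 < ξ) (hξM : 4 * M ^ 2 / ε ^ 2 ≤ ξ)
    (u u' u'' : ℝ → ℝ)
    (hu1 : ∀ x ∈ Ici (0:ℝ), HasDerivAt u (u' x) x)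
    (hu2 : ∀ x ∈ Ici (0:ℝ), HasDerivAt u' (u'' x) x)
    (hu3 : ContinuousOn u'' (Ici 0))
    (hODE : ∀ x ∈ Ici (0:ℝ), -u'' x + V x * u x = ξ * u x)
    (hbc1 : u 0 = 1) (hbc2 : u' 0 = 0) :
    ∀ L > (0:ℝ), ∫ x in (0:ℝ)..L, (u x) ^ 2 ≤ Real.exp (ε * L) / ε :=
  regularity_bound_large_energy_general V hV M hVM ε hε ξ hξ hξM u u' u'' hu1 hu2 hODE hbc1 hbc2
end
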